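/- Let (μ_i, v_i), i = 1,…,n, be eigenpairs of S M̃_s^{-1} S^T A with μ_1 ≤ μ_2 ≤ ⋯ ≤ μ_n and the eigenvectors A-orthonormal (v_i^T A v_j = δ_{ij}). Then the convergence factor of the exact TLHB method satisfies the lower bound ‖E_TL‖_A ≥ 1 − μ_{n_c+1}. -/

import Mathlib

/-!
Write `B = I - S Ms⁻ᵀ Sᵀ A` and `D = I - S Ms⁻¹ Sᵀ A` for the post- and pre-smoothing steps, so
that `E_TL = B (I - Π_A) D`. Then `D B = I - X` with `X = S M̃_s⁻¹ Sᵀ A`, and `B` is the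
`A`-adjoint of `D`, so `⟪B x, B y⟫_A = ⟪x, (I - X) y⟫_A`. The span of the eigenvectors of the
`nc + 1` smallest eigenvalues has dimension `nc + 1 > nc`, so it contains some `u ≠ 0` for which
`(I - X) u` is `A`-orthogonal to the range of `P`, i.e. is killed by `Π_A`. For `w = B u` this gives
`E_TL w = B (I - X) u`, hence
`⟪w, E_TL w⟫_A = ⟪u, (I - X)² u⟫_A ≥ (1 - μ_{nc+1}) ⟪u, (I - X) u⟫_A = (1 - μ_{nc+1}) ‖w‖_A²`,
and Cauchy–Schwarz turns this into `‖E_TL w‖_A ≥ (1 - μ_{nc+1}) ‖w‖_A`.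
-/

open Matrix

/-- Smallest eigenvalue (real spectrum). -/
noncomputable def lamMin {n : ℕ} (M : Matrix (Fin n) (Fin n) ℝ) : ℝ :=
  sInf (spectrum ℝ M)

/-- Largest eigenvalue (real spectrum). -/
noncomputable def lamMax {n : ℕ} (M : Matrix (Fin n) (Fin n) ℝ) : ℝ :=
  sSup (spectrum ℝ M)

/-- Smallest positive eigenvalue (real spectrum). -/
noncomputable def lamMinPos {n : ℕ} (M : Matrix (Fin n) (Fin n) ℝ) : ℝ :=
  sInf {t : ℝ | t ∈ spectrum ℝ M ∧ 0 < t}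

/-- Energy norm of a vector induced by an SPD matrix `A`. -/
noncomputable def eNorm {n : ℕ} (A : Matrix (Fin n) (Fin n) ℝ) (v : Fin n → ℝ) : ℝ :=
  Real.sqrt (v ⬝ᵥ A.mulVec v)

/-- `A`-norm of a matrix `B`: `‖B‖_A = sup_{v ≠ 0} ‖Bv‖_A / ‖v‖_A`. -/
noncomputable def aNorm {n : ℕ} (A B : Matrix (Fin n) (Fin n) ℝ) : ℝ :=
  sSup {r : ℝ | ∃ v : Fin n → ℝ, v ≠ 0 ∧ r = eNorm A (B.mulVec v) / eNorm A v}

/-- The `A`-orthogonal projection `Π_A = P (Pᵀ A P)⁻¹ Pᵀ A`. -/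
noncomputable def proj {n nc : ℕ} (A : Matrix (Fin n) (Fin n) ℝ)
    (P : Matrix (Fin n) (Fin nc) ℝ) : Matrix (Fin n) (Fin n) ℝ :=
  P * (Pᵀ * A * P)⁻¹ * Pᵀ * A

/-- `M̃_s = Msᵀ (Ms + Msᵀ - As)⁻¹ Ms`. -/
noncomputable def tMs {ns : ℕ} (Ms As : Matrix (Fin ns) (Fin ns) ℝ) :
    Matrix (Fin ns) (Fin ns) ℝ :=
  Msᵀ * (Ms + Msᵀ - As)⁻¹ * Ms

/-- `S M̃_s⁻¹ Sᵀ A`. -/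
noncomputable def smoothX {n ns : ℕ} (A : Matrix (Fin n) (Fin n) ℝ)
    (S : Matrix (Fin n) (Fin ns) ℝ) (Ms : Matrix (Fin ns) (Fin ns) ℝ) :
    Matrix (Fin n) (Fin n) ℝ :=
  S * (tMs Ms (Sᵀ * A * S))⁻¹ * Sᵀ * A

/-- `σ_TL = λ_min⁺( S M̃_s⁻¹ Sᵀ A (I - Π_A) )`. -/
noncomputable def sigmaTL {n ns nc : ℕ} (A : Matrix (Fin n) (Fin n) ℝ)
    (S : Matrix (Fin n) (Fin ns) ℝ) (P : Matrix (Fin n) (Fin nc) ℝ)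
    (Ms : Matrix (Fin ns) (Fin ns) ℝ) : ℝ :=
  lamMinPos (smoothX A S Ms * (1 - proj A P))

/-- Exact TLHB iteration matrix. -/
noncomputable def Etl {n ns nc : ℕ} (A : Matrix (Fin n) (Fin n) ℝ)
    (S : Matrix (Fin n) (Fin ns) ℝ) (P : Matrix (Fin n) (Fin nc) ℝ)
    (Ms : Matrix (Fin ns) (Fin ns) ℝ) : Matrix (Fin n) (Fin n) ℝ :=
  (1 - S * (Msᵀ)⁻¹ * Sᵀ * A) * (1 - proj A P) * (1 - S * Ms⁻¹ * Sᵀ * A)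

/-- Inexact TLHB iteration matrix with coarse solver `Bc`. -/
noncomputable def EtlIn {n ns nc : ℕ} (A : Matrix (Fin n) (Fin n) ℝ)
    (S : Matrix (Fin n) (Fin ns) ℝ) (P : Matrix (Fin n) (Fin nc) ℝ)
    (Ms : Matrix (Fin ns) (Fin ns) ℝ) (Bc : Matrix (Fin nc) (Fin nc) ℝ) :
    Matrix (Fin n) (Fin n) ℝ :=
  (1 - S * (Msᵀ)⁻¹ * Sᵀ * A) * (1 - P * Bc⁻¹ * Pᵀ * A) * (1 - S * Ms⁻¹ * Sᵀ * A)

section EnergyNorm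

variable {n : ℕ} {A : Matrix (Fin n) (Fin n) ℝ}

lemma dotProduct_mulVec_le_eNorm_mul_eNorm (hA : A.PosSemidef) (x y : Fin n → ℝ) :
    x ⬝ᵥ A *ᵥ y ≤ eNorm A x * eNorm A y := by
  have hnonneg : ∀ z, 0 ≤ A.toBilin' z z := fun z => by
    simpa [toBilin'_apply'] using hA.dotProduct_mulVec_nonneg z
  have hsymm : y ⬝ᵥ A *ᵥ x = x ⬝ᵥ A *ᵥ y := by
    rw [dotProduct_mulVec, ← mulVec_transpose, (isHermitian_iff_isSymm.mp hA.isHermitian).eq,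
      dotProduct_comm]
  have hcs := (A.toBilin').apply_mul_apply_le_of_forall_zero_le hnonneg x y
  simp only [toBilin'_apply', hsymm] at hcs
  rw [eNorm, eNorm, ← Real.sqrt_mul (by simpa using hA.dotProduct_mulVec_nonneg x)]
  exact Real.le_sqrt_of_sq_le (by rw [sq]; exact hcs)

lemma eNorm_pos (hA : A.PosDef) {x : Fin n → ℝ} (hx : x ≠ 0) : 0 < eNorm A x :=
  Real.sqrt_pos.mpr (by simpa using hA.dotProduct_mulVec_pos hx)

lemma mulVec_dotProduct_mulVec_self_le {m k : Type*} [Fintype m] [Fintype k]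
    (M : Matrix m k ℝ) (x : k → ℝ) :
    M *ᵥ x ⬝ᵥ M *ᵥ x ≤ (∑ i, ∑ j, M i j ^ 2) * (x ⬝ᵥ x) := by
  simp only [dotProduct, mulVec, ← sq]
  rw [Finset.sum_mul]
  exact Finset.sum_le_sum fun i _ => Finset.sum_mul_sq_le_sq_mul_sq _ _ _

open scoped MatrixOrder in
lemma exists_eNorm_mulVec_le (hA : A.PosDef) (E : Matrix (Fin n) (Fin n) ℝ) :
    ∃ C, ∀ x, eNorm A (E *ᵥ x) ≤ C * eNorm A x := by
  set R := CFC.sqrt A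
  have hRR : R * R = A := CFC.sqrt_mul_sqrt_self A hA.posSemidef.nonneg
  have hRT : Rᵀ = R := (isHermitian_iff_isSymm.mp (CFC.sqrt_nonneg A).posSemidef.isHermitian).eq
  have hR : IsUnit R.det := by
    refine isUnit_iff_ne_zero.mpr fun h => hA.det_pos.ne' ?_
    rw [← hRR, det_mul, h, zero_mul]
  -- `‖x‖_A = |R x|` and `R E = N R`, so the Frobenius norm of `N` bounds `E` in the `A`-norm.
  have hnorm : ∀ x, eNorm A x = Real.sqrt (R *ᵥ x ⬝ᵥ R *ᵥ x) := fun x => by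
    rw [eNorm, ← hRR, ← mulVec_mulVec, dotProduct_mulVec, ← mulVec_transpose, hRT,
      dotProduct_comm]
  set N := R * E * R⁻¹
  have hN : ∀ x, R *ᵥ (E *ᵥ x) = N *ᵥ (R *ᵥ x) := fun x => by
    rw [mulVec_mulVec, mulVec_mulVec, Matrix.mul_assoc, nonsing_inv_mul _ hR, Matrix.mul_one]
  refine ⟨Real.sqrt (∑ i, ∑ j, N i j ^ 2), fun x => ?_⟩
  rw [hnorm, hnorm, hN, ← Real.sqrt_mul (by positivity)]
  exact Real.sqrt_le_sqrt (mulVec_dotProduct_mulVec_self_le N _)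

lemma bddAbove_eNorm_ratio (hA : A.PosDef) (E : Matrix (Fin n) (Fin n) ℝ) :
    BddAbove {r : ℝ | ∃ v : Fin n → ℝ, v ≠ 0 ∧ r = eNorm A (E.mulVec v) / eNorm A v} := by
  obtain ⟨C, hC⟩ := exists_eNorm_mulVec_le hA E
  refine ⟨C, ?_⟩
  rintro r ⟨x, hx, rfl⟩
  exact (div_le_iff₀ (eNorm_pos hA hx)).mpr (hC x)

lemma aNorm_nonneg (B : Matrix (Fin n) (Fin n) ℝ) : 0 ≤ aNorm A B :=
  Real.sSup_nonneg fun _ ⟨_, _, hr⟩ => hr ▸ div_nonneg (Real.sqrt_nonneg _) (Real.sqrt_nonneg _)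

lemma le_aNorm_of_mul_dotProduct_le (hA : A.PosDef) (E : Matrix (Fin n) (Fin n) ℝ)
    {x : Fin n → ℝ} (hx : x ≠ 0) {c : ℝ} (h : c * (x ⬝ᵥ A *ᵥ x) ≤ x ⬝ᵥ A *ᵥ (E *ᵥ x)) :
    c ≤ aNorm A E := by
  have hxA := eNorm_pos hA hx
  have hsq : x ⬝ᵥ A *ᵥ x = eNorm A x * eNorm A x :=
    (Real.mul_self_sqrt (hA.posSemidef.dotProduct_mulVec_nonneg x)).symm
  have hratio : c ≤ eNorm A (E *ᵥ x) / eNorm A x := by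
    rw [le_div_iff₀ hxA]
    refine le_of_mul_le_mul_right ?_ hxA
    calc c * eNorm A x * eNorm A x = c * (x ⬝ᵥ A *ᵥ x) := by rw [hsq, mul_assoc]
      _ ≤ x ⬝ᵥ A *ᵥ (E *ᵥ x) := h
      _ ≤ eNorm A x * eNorm A (E *ᵥ x) := dotProduct_mulVec_le_eNorm_mul_eNorm hA.posSemidef _ _
      _ = _ := mul_comm _ _
  exact hratio.trans (le_csSup (bddAbove_eNorm_ratio hA E) ⟨x, hx, rfl⟩)

end EnergyNorm

/-- The error propagation of one smoothing sweep with `M`; the post-smoother of `Etl` is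
`smoothingStep A S Msᵀ`. -/
noncomputable def smoothingStep {n ns : ℕ} (A : Matrix (Fin n) (Fin n) ℝ)
    (S : Matrix (Fin n) (Fin ns) ℝ) (M : Matrix (Fin ns) (Fin ns) ℝ) : Matrix (Fin n) (Fin n) ℝ :=
  1 - S * M⁻¹ * Sᵀ * A

section Smoothing

variable {n ns nc : ℕ} {A : Matrix (Fin n) (Fin n) ℝ} (S : Matrix (Fin n) (Fin ns) ℝ)

lemma transpose_smoothingStep_mul (hA : Aᵀ = A) (M : Matrix (Fin ns) (Fin ns) ℝ) :
    (smoothingStep A S M)ᵀ * A = A * smoothingStep A S Mᵀ := by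
  simp only [smoothingStep, transpose_sub, transpose_one, transpose_mul, transpose_transpose, hA,
    transpose_nonsing_inv, Matrix.sub_mul, Matrix.mul_sub, Matrix.one_mul, Matrix.mul_one,
    Matrix.mul_assoc]

lemma inv_tMs {Ms As : Matrix (Fin ns) (Fin ns) ℝ} (hMs : IsUnit Ms.det)
    (hW : IsUnit (Ms + Msᵀ - As).det) :
    (tMs Ms As)⁻¹ = Ms⁻¹ + (Msᵀ)⁻¹ - Ms⁻¹ * As * (Msᵀ)⁻¹ := by
  have hMsT : IsUnit (Msᵀ).det := by rwa [det_transpose]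
  rw [tMs, Matrix.mul_inv_rev, Matrix.mul_inv_rev, nonsing_inv_nonsing_inv _ hW, Matrix.sub_mul,
    Matrix.add_mul, mul_nonsing_inv _ hMsT, Matrix.mul_sub, Matrix.mul_add,
    ← Matrix.mul_assoc Ms⁻¹ Ms, nonsing_inv_mul _ hMs, Matrix.one_mul, Matrix.mul_one,
    ← Matrix.mul_assoc]
  abel

lemma smoothingStep_mul_smoothingStep_transpose {Ms : Matrix (Fin ns) (Fin ns) ℝ}
    (hMs : IsUnit Ms.det) (hW : IsUnit (Ms + Msᵀ - Sᵀ * A * S).det) :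
    smoothingStep A S Ms * smoothingStep A S Msᵀ = 1 - smoothX A S Ms := by
  rw [smoothingStep, smoothingStep, smoothX, inv_tMs hMs hW]
  simp only [Matrix.mul_add, Matrix.add_mul, Matrix.mul_sub, Matrix.sub_mul,
    Matrix.mul_one, Matrix.one_mul, Matrix.mul_assoc]
  abel

lemma smoothingStep_transpose_dotProduct_mulVec {Ms : Matrix (Fin ns) (Fin ns) ℝ} (hA : Aᵀ = A)
    (hMs : IsUnit Ms.det) (hW : IsUnit (Ms + Msᵀ - Sᵀ * A * S).det) (x y : Fin n → ℝ) :
    smoothingStep A S Msᵀ *ᵥ x ⬝ᵥ A *ᵥ (smoothingStep A S Msᵀ *ᵥ y) =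
      x ⬝ᵥ A *ᵥ ((1 - smoothX A S Ms) *ᵥ y) := by
  rw [dotProduct_comm, dotProduct_mulVec, ← mulVec_transpose, dotProduct_comm, mulVec_mulVec,
    mulVec_mulVec, transpose_smoothingStep_mul S hA, transpose_transpose,
    Matrix.mul_assoc, smoothingStep_mul_smoothingStep_transpose S hMs hW, ← mulVec_mulVec]

lemma proj_mulVec_eq_zero (P : Matrix (Fin n) (Fin nc) ℝ) {z : Fin n → ℝ}
    (hz : Pᵀ *ᵥ (A *ᵥ z) = 0) : proj A P *ᵥ z = 0 := by
  rw [proj, ← mulVec_mulVec, ← mulVec_mulVec, ← mulVec_mulVec, hz, mulVec_zero, mulVec_zero]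

lemma Etl_mulVec_smoothingStep (P : Matrix (Fin n) (Fin nc) ℝ) {Ms : Matrix (Fin ns) (Fin ns) ℝ}
    (hMs : IsUnit Ms.det) (hW : IsUnit (Ms + Msᵀ - Sᵀ * A * S).det) {u : Fin n → ℝ}
    (hu : Pᵀ *ᵥ (A *ᵥ ((1 - smoothX A S Ms) *ᵥ u)) = 0) :
    Etl A S P Ms *ᵥ (smoothingStep A S Msᵀ *ᵥ u) =
      smoothingStep A S Msᵀ *ᵥ ((1 - smoothX A S Ms) *ᵥ u) := by
  have hcoarse : (1 - proj A P) *ᵥ ((1 - smoothX A S Ms) *ᵥ u) = (1 - smoothX A S Ms) *ᵥ u := by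
    rw [sub_mulVec, one_mulVec, proj_mulVec_eq_zero P hu, sub_zero]
  change (smoothingStep A S Msᵀ * (1 - proj A P) * smoothingStep A S Ms) *ᵥ _ = _
  rw [← mulVec_mulVec, mulVec_mulVec _ (smoothingStep A S Ms),
    smoothingStep_mul_smoothingStep_transpose S hMs hW, ← mulVec_mulVec, hcoarse]

end Smoothing

section Eigenbasis

variable {n : ℕ} {ι : Type*} [Fintype ι] {A Y : Matrix (Fin n) (Fin n) ℝ}
  {v : ι → Fin n → ℝ} {t : ι → ℝ}

lemma mulVec_sum_smul_of_eigen (heig : ∀ i, Y *ᵥ v i = t i • v i) (c : ι → ℝ) :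
    Y *ᵥ ∑ i, c i • v i = ∑ i, (c i * t i) • v i := by
  simp only [mulVec_sum, mulVec_smul, heig, smul_smul]

lemma sum_smul_dotProduct_mulVec_sum_smul [DecidableEq ι]
    (horth : ∀ i j, v i ⬝ᵥ A *ᵥ v j = if i = j then 1 else 0) (a b : ι → ℝ) :
    (∑ i, a i • v i) ⬝ᵥ A *ᵥ ∑ i, b i • v i = ∑ i, a i * b i := by
  simp only [mulVec_sum, mulVec_smul, sum_dotProduct, dotProduct_sum, smul_dotProduct,
    dotProduct_smul, horth, smul_eq_mul, mul_ite, mul_one, mul_zero, Finset.sum_ite_eq',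
    Finset.mem_univ, if_true]
  exact Finset.sum_congr rfl fun i _ => mul_comm _ _

lemma mul_dotProduct_mulVec_le_of_eigen [DecidableEq ι] (heig : ∀ i, Y *ᵥ v i = t i • v i)
    (horth : ∀ i j, v i ⬝ᵥ A *ᵥ v j = if i = j then 1 else 0) {t₀ : ℝ} (ht₀ : 0 ≤ t₀)
    (ht : ∀ i, t₀ ≤ t i) (c : ι → ℝ) :
    t₀ * ((∑ i, c i • v i) ⬝ᵥ A *ᵥ (Y *ᵥ ∑ i, c i • v i)) ≤
      (∑ i, c i • v i) ⬝ᵥ A *ᵥ (Y *ᵥ (Y *ᵥ ∑ i, c i • v i)) := by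
  simp only [mulVec_sum_smul_of_eigen heig, sum_smul_dotProduct_mulVec_sum_smul horth,
    Finset.mul_sum]
  refine Finset.sum_le_sum fun i _ => ?_
  have hti := ht i
  nlinarith [mul_nonneg (mul_nonneg (mul_self_nonneg (c i)) (ht₀.trans hti)) (sub_nonneg.2 hti)]

lemma dotProduct_mulVec_pos_of_eigen [DecidableEq ι] (heig : ∀ i, Y *ᵥ v i = t i • v i)
    (horth : ∀ i j, v i ⬝ᵥ A *ᵥ v j = if i = j then 1 else 0) {t₀ : ℝ} (ht₀ : 0 < t₀)
    (ht : ∀ i, t₀ ≤ t i) {c : ι → ℝ} (hc : c ≠ 0) :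
    0 < (∑ i, c i • v i) ⬝ᵥ A *ᵥ (Y *ᵥ ∑ i, c i • v i) := by
  rw [mulVec_sum_smul_of_eigen heig, sum_smul_dotProduct_mulVec_sum_smul horth]
  obtain ⟨i₀, hi₀⟩ := Function.ne_iff.mp hc
  refine Finset.sum_pos' (fun i _ => ?_) ⟨i₀, Finset.mem_univ _, ?_⟩
  · nlinarith [mul_self_nonneg (c i), ht i]
  · nlinarith [mul_self_pos.mpr hi₀, ht i₀]

end Eigenbasis

lemma exists_ne_zero_mulVec_sum_smul_eq_zero {ι κ m : Type*} [Fintype ι] [Fintype κ] [Fintype m]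
    (M : Matrix κ m ℝ) (v : ι → m → ℝ) (h : Fintype.card κ < Fintype.card ι) :
    ∃ c : ι → ℝ, c ≠ 0 ∧ M *ᵥ ∑ i, c i • v i = 0 := by
  have hker := LinearMap.ker_ne_bot_of_finrank_lt
    (f := M.mulVecLin ∘ₗ Fintype.linearCombination ℝ v) (by simpa using h)
  obtain ⟨c, hc, hc0⟩ := (Submodule.ne_bot_iff _).mp hker
  simp only [LinearMap.mem_ker, LinearMap.comp_apply, Fintype.linearCombination_apply,
    mulVecLin_apply] at hc
  exact ⟨c, hc0, hc⟩

theorem optimal_interpolation_lower_bound_general {n ns nc : ℕ}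
    (A : Matrix (Fin n) (Fin n) ℝ) (hA : A.PosDef)
    (S : Matrix (Fin n) (Fin ns) ℝ)
    (P : Matrix (Fin n) (Fin nc) ℝ)
    (hnc : nc < n)
    (Ms : Matrix (Fin ns) (Fin ns) ℝ) (hMs : IsUnit Ms.det)
    (hMsA : (Ms + Msᵀ - Sᵀ * A * S).PosDef)
    (μ : Fin n → ℝ) (v : Fin n → Fin n → ℝ)
    (hmono : Monotone μ)
    (heig : ∀ i, (smoothX A S Ms).mulVec (v i) = μ i • v i)
    (horth : ∀ i j, v i ⬝ᵥ A.mulVec (v j) = if i = j then 1 else 0) :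
    1 - μ ⟨nc, hnc⟩ ≤ aNorm A (Etl A S P Ms) := by
  rcases le_or_gt (1 - μ ⟨nc, hnc⟩) 0 with hneg | hpos
  · exact hneg.trans (aNorm_nonneg _)
  have hAT : Aᵀ = A := (isHermitian_iff_isSymm.mp hA.isHermitian).eq
  have hW : IsUnit (Ms + Msᵀ - Sᵀ * A * S).det := hMsA.det_pos.ne'.isUnit
  set Y := 1 - smoothX A S Ms
  set w : Fin (nc + 1) → Fin n → ℝ := fun i => v (Fin.castLE hnc i)
  have hYw : ∀ i, Y *ᵥ w i = (1 - μ (Fin.castLE hnc i)) • w i := fun i => by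
    simp only [Y, w, sub_mulVec, one_mulVec, heig, sub_smul, one_smul]
  have hw : ∀ i j, w i ⬝ᵥ A *ᵥ w j = if i = j then 1 else 0 := fun i j => by
    simp only [w, horth, (Fin.castLE_injective hnc).eq_iff]
  have hμ : ∀ i, 1 - μ ⟨nc, hnc⟩ ≤ 1 - μ (Fin.castLE hnc i) := fun i =>
    sub_le_sub_left (hmono (Fin.le_def.mpr (Nat.lt_succ_iff.mp i.isLt))) 1
  obtain ⟨c, hc, hcoarse⟩ := exists_ne_zero_mulVec_sum_smul_eq_zero (Pᵀ * A * Y) w (by simp)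
  set u := ∑ i, c i • w i
  have hPY : Pᵀ *ᵥ (A *ᵥ (Y *ᵥ u)) = 0 := by rwa [← mulVec_mulVec, ← mulVec_mulVec] at hcoarse
  have hquad := smoothingStep_transpose_dotProduct_mulVec S hAT hMs hW
  have huYu : 0 < u ⬝ᵥ A *ᵥ (Y *ᵥ u) := dotProduct_mulVec_pos_of_eigen hYw hw hpos hμ hc
  have hBu : smoothingStep A S Msᵀ *ᵥ u ≠ 0 := fun h => by
    have := hquad u u
    rw [h, zero_dotProduct] at this
    exact huYu.ne this
  refine le_aNorm_of_mul_dotProduct_le hA _ hBu ?_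
  rw [Etl_mulVec_smoothingStep S P hMs hW hPY, hquad, hquad]
  exact mul_dotProduct_mulVec_le_of_eigen hYw hw hpos.le hμ c

/-- Optimal interpolation lower bound: if `(μ_i, v_i)` are `A`-orthonormal eigenpairs of
`S M̃_s⁻¹ Sᵀ A` with `μ_1 ≤ ⋯ ≤ μ_n`, then `‖E_TL‖_A ≥ 1 - μ_{n_c+1}`. -/
theorem optimal_interpolation_lower_bound {n ns nc : ℕ}
    (A : Matrix (Fin n) (Fin n) ℝ) (hA : A.PosDef)
    (S : Matrix (Fin n) (Fin ns) ℝ) (hS : S.rank = ns)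
    (P : Matrix (Fin n) (Fin nc) ℝ) (hP : P.rank = nc)
    (hns : ns < n) (hnc : nc < n) (hsum : n ≤ ns + nc)
    (hSP : (fromCols S P).rank = n)
    (Ms : Matrix (Fin ns) (Fin ns) ℝ) (hMs : IsUnit Ms.det)
    (hMsA : (Ms + Msᵀ - Sᵀ * A * S).PosDef)
    (μ : Fin n → ℝ) (v : Fin n → Fin n → ℝ)
    (hmono : Monotone μ)
    (heig : ∀ i, (smoothX A S Ms).mulVec (v i) = μ i • v i)
    (horth : ∀ i j, v i ⬝ᵥ A.mulVec (v j) = if i = j then 1 else 0) :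
    1 - μ ⟨nc, hnc⟩ ≤ aNorm A (Etl A S P Ms) :=
  optimal_interpolation_lower_bound_general A hA S P hnc Ms hMs hMsA μ v hmono heig horth
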